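/- Let N be a structural conflict net. If N has exactly one maximal FS-run (maximal with respect to set inclusion among FS-runs of N), then N is conflict-free. -/

import Mathlib

open scoped Classical

noncomputable section

/-- A place/transition net: `pre t s` and `post t s` are the arc weights
`F(s,t)` and `F(t,s)` of the flow relation, and `M0` is the initial marking.
Every transition has a finite non-empty set of preplaces and a finite set of
postplaces. -/
structure Net (S : Type*) (T : Type*) where
  pre : T → S → ℕ
  post : T → S → ℕ
  M0 : S → ℕ
  pre_fin : ∀ t, {s | pre t s ≠ 0}.Finite
  pre_ne : ∀ t, ∃ s, pre t s ≠ 0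
  post_fin : ∀ t, {s | post t s ≠ 0}.Finite

namespace Net

variable {S T : Type*}

/-- `•G`: the multiset of preplaces of a finite multiset `G` of transitions,
as a function `S → ℕ`. -/
def preM (N : Net S T) (G : Multiset T) (s : S) : ℕ :=
  (G.map fun t => N.pre t s).sum

/-- `G•`: the multiset of postplaces of a finite multiset `G` of transitions. -/
def postM (N : Net S T) (G : Multiset T) (s : S) : ℕ :=
  (G.map fun t => N.post t s).sum

/-- The (non-empty, finite) multiset `G` of transitions is enabled in marking `M`. -/
def Enabled (N : Net S T) (M : S → ℕ) (G : Multiset T) : Prop :=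
  G ≠ 0 ∧ ∀ s, N.preM G s ≤ M s

/-- `G` is a step from `M` to `M'`. -/
def Step (N : Net S T) (M : S → ℕ) (G : Multiset T) (M' : S → ℕ) : Prop :=
  N.Enabled M G ∧ ∀ s, M' s = M s - N.preM G s + N.postM G s

/-- `M →σ M'`: sequential firing of the word `σ` of transitions. -/
def FireSeq (N : Net S T) : (S → ℕ) → List T → (S → ℕ) → Prop
  | M, [], M' => M' = M
  | M, t :: σ, M' => ∃ M₁, N.Step M {t} M₁ ∧ N.FireSeq M₁ σ M'

/-- `σ` is a firing sequence of `N`. -/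
def FS (N : Net S T) (σ : List T) : Prop := ∃ M', N.FireSeq N.M0 σ M'

/-- `M` is reachable from the initial marking. -/
def Reachable (N : Net S T) (M : S → ℕ) : Prop := ∃ σ, N.FireSeq N.M0 σ M

/-- Two firing sequences are adjacent iff they differ only in the exchange of
two neighbouring transitions that could have been fired in one step. -/
def Adjacent (N : Net S T) (σ ρ : List T) : Prop :=
  N.FS σ ∧ N.FS ρ ∧
    ∃ (σ₁ : List T) (t u : T) (σ₂ : List T) (M : S → ℕ),
      σ = σ₁ ++ t :: u :: σ₂ ∧ ρ = σ₁ ++ u :: t :: σ₂ ∧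
      N.FireSeq N.M0 σ₁ M ∧ N.Enabled M (t ::ₘ {u})

/-- `↔*`: the reflexive transitive closure of adjacency. -/
def AdjEquiv (N : Net S T) : List T → List T → Prop :=
  Relation.ReflTransGen N.Adjacent

/-- A structural conflict net: transitions that can occur together in a step
never share a preplace. -/
def StructuralConflictNet (N : Net S T) : Prop :=
  ∀ t u : T, (∃ M, N.Reachable M ∧ N.Enabled M (t ::ₘ {u})) →
    ∀ s, N.pre t s = 0 ∨ N.pre u s = 0

/-- The finite non-empty multiset `G` of transitions is in (semantic) conflict
in the marking `M`: every `G↾{t}` is enabled but `G` itself is not. -/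
def InConflict (N : Net S T) (M : S → ℕ) (G : Multiset T) : Prop :=
  G ≠ 0 ∧ (∀ t ∈ G, N.Enabled M (Multiset.replicate (G.count t) t)) ∧
    ¬ N.Enabled M G

/-- `N` is (semantic) conflict-free. -/
def ConflictFree (N : Net S T) : Prop :=
  ∀ M, N.Reachable M → ∀ G : Multiset T, ¬ N.InConflict M G

end Net

/-- The type of firing sequences of `N`. -/
def FSeq {S T : Type*} (N : Net S T) := {σ : List T // N.FS σ}

/-- Partial FS-runs: `↔*`-equivalence classes of firing sequences. -/
def PartialFSRun {S T : Type*} (N : Net S T) :=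
  Quot (fun σ ρ : FSeq N => N.AdjEquiv σ.1 ρ.1)

/-- `[σ]`, the `↔*`-equivalence class of a firing sequence. -/
def fsClass {S T : Type*} (N : Net S T) (σ : FSeq N) : PartialFSRun N :=
  Quot.mk _ σ

/-- The prefix order on partial FS-runs: `[σ] ≤ [ρ]` iff
`∃ μ, σ ≤ μ ↔* ρ`. -/
def fsRunLE {S T : Type*} (N : Net S T) (x y : PartialFSRun N) : Prop :=
  ∃ σ ρ : FSeq N, fsClass N σ = x ∧ fsClass N ρ = y ∧
    ∃ μ : List T, σ.1 <+: μ ∧ N.AdjEquiv μ ρ.1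

/-- An FS-run: a prefix-closed and directed set of partial FS-runs. -/
def IsFSRun {S T : Type*} (N : Net S T) (R : Set (PartialFSRun N)) : Prop :=
  (∀ x y, fsRunLE N x y → y ∈ R → x ∈ R) ∧
  (∀ x ∈ R, ∀ y ∈ R, ∃ z ∈ R, fsRunLE N x z ∧ fsRunLE N y z)

/-- An FS-run `R` is conflict-free iff whenever, for every `t` in a finite
non-empty multiset `G`, the class of `σ t^{G(t)}` belongs to `R` and
`M₀ →σ →(G↾{t})`, then `M₀ →σ →G`. -/
def ConflictFreeFSRun {S T : Type*} (N : Net S T)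
    (R : Set (PartialFSRun N)) : Prop :=
  ∀ (G : Multiset T) (σ : List T), G ≠ 0 →
    (∀ t ∈ G,
      (∃ h : N.FS (σ ++ List.replicate (G.count t) t),
        fsClass N ⟨σ ++ List.replicate (G.count t) t, h⟩ ∈ R) ∧
      ∃ M, N.FireSeq N.M0 σ M ∧
        N.Enabled M (Multiset.replicate (G.count t) t)) →
    ∃ M, N.FireSeq N.M0 σ M ∧ N.Enabled M G

/-- The raw data of a candidate (GR-)process of a net with places `S` and
transitions `T`: an occurrence net whose places are drawn from `α` and whose
transitions are drawn from `β`, together with the projections to `S` and `T`. -/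
structure RawProc (S T α β : Type*) where
  places : Set α
  transitions : Set β
  flowPT : α → β → ℕ
  flowTP : β → α → ℕ
  initMark : α → ℕ
  projS : α → S
  projT : β → T

namespace RawProc

variable {S T α β : Type*}

/-- The flow relation of the occurrence net, as a relation on `α ⊕ β`. -/
def flowRel (P : RawProc S T α β) : (α ⊕ β) → (α ⊕ β) → Prop := fun x y =>
  match x, y with
  | Sum.inl p, Sum.inr t => P.flowPT p t ≠ 0
  | Sum.inr t, Sum.inl p => P.flowTP t p ≠ 0
  | _, _ => False

/-- `F⁺`, the transitive closure of the flow relation. -/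
def causal (P : RawProc S T α β) : (α ⊕ β) → (α ⊕ β) → Prop :=
  Relation.TransGen P.flowRel

/-- `P` is finite iff its set of transitions is finite. -/
def FiniteProc (P : RawProc S T α β) : Prop := P.transitions.Finite

/-- `Q` is a prefix of `P` (written `Q ≤ P`): the places and transitions of `Q`
are included in those of `P`, the initial markings coincide, and flow relation
and projection of `Q` are the restrictions of those of `P`. -/
def IsPrefix (Q P : RawProc S T α β) : Prop :=
  Q.places ⊆ P.places ∧ Q.transitions ⊆ P.transitions ∧
  Q.initMark = P.initMark ∧
  (∀ p ∈ Q.places, ∀ t ∈ Q.transitions,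
    Q.flowPT p t = P.flowPT p t ∧ Q.flowTP t p = P.flowTP t p) ∧
  (∀ p ∈ Q.places, Q.projS p = P.projS p) ∧
  (∀ t ∈ Q.transitions, Q.projT t = P.projT t)

/-- Isomorphism of processes of the same net: a bijection between places and
between transitions preserving flow, initial marking and the projections. -/
def Iso (P Q : RawProc S T α β) : Prop :=
  ∃ (fS : α → α) (fT : β → β),
    Set.BijOn fS P.places Q.places ∧ Set.BijOn fT P.transitions Q.transitions ∧
    (∀ p ∈ P.places, ∀ t ∈ P.transitions,
      Q.flowPT (fS p) (fT t) = P.flowPT p t ∧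
      Q.flowTP (fT t) (fS p) = P.flowTP t p) ∧
    (∀ p ∈ P.places, Q.initMark (fS p) = P.initMark p) ∧
    (∀ p ∈ P.places, Q.projS (fS p) = P.projS p) ∧
    (∀ t ∈ P.transitions, Q.projT (fT t) = P.projT t)

/-- `swap(P,p,q)`: exchange the outgoing arcs of the places `p` and `q`. -/
def swap (P : RawProc S T α β) (p q : α) : RawProc S T α β :=
  { P with flowPT := fun x t =>
      if x = p then P.flowPT q t
      else if x = q then P.flowPT p t
      else P.flowPT x t }

/-- One step swapping equivalence `P ≈s Q`: `swap(P,p,q)` is isomorphic to `Q`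
for some causally unrelated places `p`, `q` with the same image in the net. -/
def SwapStep (P Q : RawProc S T α β) : Prop :=
  ∃ p q : α, p ∈ P.places ∧ q ∈ P.places ∧ P.projS p = P.projS q ∧
    ¬ P.causal (Sum.inl p) (Sum.inl q) ∧ ¬ P.causal (Sum.inl q) (Sum.inl p) ∧
    Iso (P.swap p q) Q

/-- `≈s*`: the reflexive transitive closure of one step swapping equivalence. -/
def SwapEquiv : RawProc S T α β → RawProc S T α β → Prop :=
  Relation.ReflTransGen SwapStep

/-- `Lin(P)`: the linearisations of a finite process `P`, i.e. the images under
the projection of the enumerations of its transitions compatible with `F*`. -/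
def Lin (P : RawProc S T α β) : Set (List T) :=
  { σ | ∃ ts : List β, ts.Nodup ∧ (∀ t : β, t ∈ ts ↔ t ∈ P.transitions) ∧
      (∀ (i j : ℕ) (hi : i < ts.length) (hj : j < ts.length),
        Relation.ReflTransGen P.flowRel
          (Sum.inr (ts.get ⟨i, hi⟩)) (Sum.inr (ts.get ⟨j, hj⟩)) → i ≤ j) ∧
      σ = ts.map P.projT }

end RawProc

/-- `P` is a (GR-)process of the net `N`: its underlying net is an occurrence
net (unbranched places, acyclic flow, finite causal pasts, transitions with
finite non-empty presets and finite postsets), the flow, initial marking and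
projections are normalised to vanish outside the places/transitions, and the
projection maps the process onto `N` respecting initial marking and arc
weights (counted via the preimages of the projection). -/
structure IsProcessOf {S T α β : Type*} (N : Net S T)
    (P : RawProc S T α β) : Prop where
  flowPT_dom : ∀ p t, P.flowPT p t ≠ 0 → p ∈ P.places ∧ t ∈ P.transitions
  flowTP_dom : ∀ t p, P.flowTP t p ≠ 0 → p ∈ P.places ∧ t ∈ P.transitions
  initMark_dom : ∀ p, p ∉ P.places → P.initMark p = 0
  pre_place : ∀ p ∈ P.places,
    {t | P.flowTP t p ≠ 0}.Subsingleton ∧ ∀ t, P.flowTP t p ≤ 1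
  post_place : ∀ p ∈ P.places,
    {t | P.flowPT p t ≠ 0}.Subsingleton ∧ ∀ t, P.flowPT p t ≤ 1
  init_one : ∀ p ∈ P.places, (∀ t, P.flowTP t p = 0) → P.initMark p = 1
  init_zero : ∀ p ∈ P.places, (∃ t, P.flowTP t p ≠ 0) → P.initMark p = 0
  acyclic : ∀ x, ¬ P.causal x x
  finite_past : ∀ t ∈ P.transitions,
    {u : β | P.causal (Sum.inr u) (Sum.inr t)}.Finite
  t_pre_fin : ∀ t ∈ P.transitions, {p | P.flowPT p t ≠ 0}.Finite
  t_pre_ne : ∀ t ∈ P.transitions, ∃ p, P.flowPT p t ≠ 0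
  t_post_fin : ∀ t ∈ P.transitions, {p | P.flowTP t p ≠ 0}.Finite
  proj_init_fin : ∀ s : S, {p | P.projS p = s ∧ P.initMark p ≠ 0}.Finite
  proj_init : ∀ s : S, (∑ᶠ p ∈ {p | P.projS p = s}, P.initMark p) = N.M0 s
  proj_pre : ∀ t ∈ P.transitions, ∀ s : S,
    (∑ᶠ p ∈ {p | P.projS p = s}, P.flowPT p t) = N.pre (P.projT t) s
  proj_post : ∀ t ∈ P.transitions, ∀ s : S,
    (∑ᶠ p ∈ {p | P.projS p = s}, P.flowTP t p) = N.post (P.projT t) s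

/-- The type of finite GR-processes of `N` with places in `α` and transitions
in `β`. -/
def FinProcOf {S T : Type*} (N : Net S T) (α β : Type*) :=
  {P : RawProc S T α β // IsProcessOf N P ∧ P.FiniteProc}

/-- Partial BD-runs: `≈s*`-equivalence classes of finite GR-processes. -/
def PartialBDRun {S T : Type*} (N : Net S T) (α β : Type*) :=
  Quot (fun P Q : FinProcOf N α β => RawProc.SwapEquiv P.1 Q.1)

/-- `⟦P⟧`, the `≈s*`-equivalence class of a finite process. -/
def bdClass {S T α β : Type*} (N : Net S T) (P : FinProcOf N α β) :
    PartialBDRun N α β :=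
  Quot.mk _ P

/-- The lifted prefix relation on `≈s*`-equivalence classes:
`⟦P⟧ ≤ ⟦Q⟧` iff `P ≈s* P' ≤ Q' ≈s* Q` for some `P'`, `Q'`. -/
def bdRunLE {S T α β : Type*} (N : Net S T)
    (x y : PartialBDRun N α β) : Prop :=
  ∃ P Q : FinProcOf N α β, bdClass N P = x ∧ bdClass N Q = y ∧
    ∃ P' Q' : RawProc S T α β,
      RawProc.SwapEquiv P.1 P' ∧ RawProc.IsPrefix P' Q' ∧
      RawProc.SwapEquiv Q' Q.1

/-- A BD-run: a prefix-closed and directed set of partial BD-runs. -/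
def IsBDRun {S T α β : Type*} (N : Net S T)
    (R : Set (PartialBDRun N α β)) : Prop :=
  (∀ x y, bdRunLE N x y → y ∈ R → x ∈ R) ∧
  (∀ x ∈ R, ∀ y ∈ R, ∃ z ∈ R, bdRunLE N x z ∧ bdRunLE N y z)

/-- `⌊P⌋ = ↓{⟦P'⟧ | P' ≤ P, P' finite}`: the prefix-closure of the set of
classes of finite prefixes of the process `P`. -/
def BDify {S T α β : Type*} (N : Net S T) (P : RawProc S T α β) :
    Set (PartialBDRun N α β) :=
  { x | ∃ Q : FinProcOf N α β, RawProc.IsPrefix Q.1 P ∧ bdRunLE N x (bdClass N Q) }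

/-- Swapping equivalence `P ≈s∞ Q` of (possibly infinite) processes:
`↓{⟦P'⟧ | P' ≤ P, P' finite} = ↓{⟦Q'⟧ | Q' ≤ Q, Q' finite}`. -/
def SwapEquivInf {S T α β : Type*} (N : Net S T)
    (P Q : RawProc S T α β) : Prop :=
  BDify N P = BDify N Q

/-- A canonical carrier type, large enough to host every GR-process of a net
with places `S` and transitions `T`. -/
abbrev BigCarrier (S T : Type*) := Set ((S ⊕ T) × ℕ)

end

/-!
If `G` is in conflict in a marking reached by `σ`, the preset of `G` overflows at some place `s`
although each `G↾{t}` fits, so two distinct transitions `t, u ∈ G` both consume from `s`. In a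
structural conflict net two consumers of `s` never occur together in a step, so the exchanges
generating `↔*` never reorder consumers of `s`: the projection of a firing sequence onto the
consumers of `s` is an invariant of `↔*` and grows along `≤`. By Zorn, `[σt]` and `[σu]` each lie
in a maximal FS-run, which is the unique one, so by directedness they have a common upper bound
`[ρ]`. Then both `proj σ ++ [t]` and `proj σ ++ [u]` are prefixes of `proj ρ`, forcing `t = u`.
-/

namespace Net

variable {S T : Type*} {N : Net S T} {M M' M₁ M₂ : S → ℕ} {σ ρ w : List T} {t u : T}

@[simp]
theorem preM_add (G H : Multiset T) (s : S) : N.preM (G + H) s = N.preM G s + N.preM H s := by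
  simp [preM]

@[simp]
theorem preM_cons (t : T) (G : Multiset T) (s : S) :
    N.preM (t ::ₘ G) s = N.pre t s + N.preM G s := by
  simp [preM]

@[simp]
theorem preM_singleton (t : T) (s : S) : N.preM {t} s = N.pre t s := by
  simp [preM]

@[simp]
theorem preM_replicate (n : ℕ) (t : T) (s : S) :
    N.preM (Multiset.replicate n t) s = n * N.pre t s := by
  simp [preM, Multiset.map_replicate]

theorem preM_mono {G H : Multiset T} (h : H ≤ G) (s : S) : N.preM H s ≤ N.preM G s := by
  obtain ⟨K, rfl⟩ := Multiset.le_iff_exists_add.1 h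
  simp

theorem Enabled.mono {G H : Multiset T} (hG : N.Enabled M G) (hH : H ≠ 0) (h : H ≤ G) :
    N.Enabled M H :=
  ⟨hH, fun s => (preM_mono h s).trans (hG.2 s)⟩

theorem step_singleton_iff :
    N.Step M {t} M' ↔ (∀ s, N.pre t s ≤ M s) ∧ ∀ s, M' s = M s - N.pre t s + N.post t s := by
  simp [Step, Enabled, postM]

theorem fireSeq_append :
    N.FireSeq M (σ ++ ρ) M' ↔ ∃ M₁, N.FireSeq M σ M₁ ∧ N.FireSeq M₁ ρ M' := by
  induction σ generalizing M with
  | nil => exact ⟨fun h => ⟨M, rfl, h⟩, by rintro ⟨_, rfl, h⟩; exact h⟩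
  | cons t σ ih => simp only [List.cons_append, FireSeq, ih]; aesop

theorem FireSeq.unique (h₁ : N.FireSeq M σ M₁) (h₂ : N.FireSeq M σ M₂) : M₁ = M₂ := by
  induction σ generalizing M with
  | nil => exact h₁.trans h₂.symm
  | cons t σ ih =>
    obtain ⟨A, hA, h₁⟩ := h₁
    obtain ⟨B, hB, h₂⟩ := h₂
    obtain rfl : A = B := funext fun s => by rw [hA.2 s, hB.2 s]
    exact ih h₁ h₂

theorem fireSeq_pair_swap (hen : N.Enabled M (t ::ₘ {u})) (h : N.FireSeq M [t, u] M') :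
    N.FireSeq M [u, t] M' := by
  have hle (s : S) : N.pre t s + N.pre u s ≤ M s := by simpa using hen.2 s
  obtain ⟨M₁, h₁, M₂, h₂, rfl⟩ := h
  rw [step_singleton_iff] at h₁ h₂
  refine ⟨fun s => M s - N.pre u s + N.post u s, step_singleton_iff.2 ⟨fun s => ?_, fun _ => rfl⟩,
    M', step_singleton_iff.2 ⟨fun s => ?_, fun s => ?_⟩, rfl⟩
  · have := hle s; omega
  · have := hle s; omega
  · have := hle s; rw [h₂.2 s, h₁.2 s]; omega

theorem Adjacent.symm (h : N.Adjacent σ ρ) : N.Adjacent ρ σ := by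
  obtain ⟨hσ, hρ, σ₁, t, u, σ₂, M, rfl, rfl, hM, hen⟩ := h
  have hen' : N.Enabled M (u ::ₘ {t}) := by rwa [← Multiset.insert_eq_cons, Multiset.pair_comm]
  exact ⟨hρ, hσ, σ₁, u, t, σ₂, M, rfl, rfl, hM, hen'⟩

theorem Adjacent.fireSeq (h : N.Adjacent σ ρ) (hσ : N.FireSeq N.M0 σ M) :
    N.FireSeq N.M0 ρ M := by
  obtain ⟨-, -, σ₁, t, u, σ₂, M₁, rfl, rfl, hM₁, hen⟩ := h
  rw [show σ₁ ++ t :: u :: σ₂ = σ₁ ++ ([t, u] ++ σ₂) by simp, fireSeq_append] at hσ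
  obtain ⟨A, hA, hσ⟩ := hσ
  obtain ⟨B, hB, hσ₂⟩ := fireSeq_append.1 hσ
  obtain rfl := hA.unique hM₁
  rw [show σ₁ ++ u :: t :: σ₂ = σ₁ ++ ([u, t] ++ σ₂) by simp]
  exact fireSeq_append.2 ⟨A, hA, fireSeq_append.2 ⟨B, fireSeq_pair_swap hen hB, hσ₂⟩⟩

theorem Adjacent.append_right (h : N.Adjacent σ ρ) (hw : N.FS (ρ ++ w)) :
    N.Adjacent (σ ++ w) (ρ ++ w) := by
  obtain ⟨M', hM'⟩ := hw
  obtain ⟨Mρ, hρ, hw⟩ := fireSeq_append.1 hM'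
  have hσw : N.FS (σ ++ w) := ⟨M', fireSeq_append.2 ⟨Mρ, h.symm.fireSeq hρ, hw⟩⟩
  obtain ⟨-, -, σ₁, t, u, σ₂, M, rfl, rfl, hM, hen⟩ := h
  exact ⟨hσw, ⟨M', hM'⟩, σ₁, t, u, σ₂ ++ w, M, by simp, by simp, hM, hen⟩

theorem AdjEquiv.symm (h : N.AdjEquiv σ ρ) : N.AdjEquiv ρ σ := by
  induction h with
  | refl => exact .refl
  | tail _ hadj ih => exact .head hadj.symm ih

theorem adjEquiv_equivalence : Equivalence N.AdjEquiv :=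
  ⟨fun _ => .refl, AdjEquiv.symm, Relation.ReflTransGen.trans⟩

theorem AdjEquiv.append_right (h : N.AdjEquiv σ ρ) (hw : N.FS (ρ ++ w)) :
    N.AdjEquiv (σ ++ w) (ρ ++ w) := by
  induction h with
  | refl => exact .refl
  | tail _ hadj ih =>
    have hadjw := hadj.append_right hw
    exact (ih hadjw.1).tail hadjw

theorem AdjEquiv.fireSeq (h : N.AdjEquiv σ ρ) (hσ : N.FireSeq N.M0 σ M) :
    N.FireSeq N.M0 ρ M := by
  induction h with
  | refl => exact hσ
  | tail _ hadj ih => exact hadj.fireSeq ih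

theorem StructuralConflictNet.filter_eq_of_adjacent (hN : N.StructuralConflictNet) (s : S)
    (h : N.Adjacent σ ρ) : σ.filter (N.pre · s ≠ 0) = ρ.filter (N.pre · s ≠ 0) := by
  obtain ⟨-, -, σ₁, t, u, σ₂, M, rfl, rfl, hM, hen⟩ := h
  rcases hN t u ⟨M, ⟨σ₁, hM⟩, hen⟩ s with h | h <;> simp [List.filter_cons, h]

theorem StructuralConflictNet.filter_eq_of_adjEquiv (hN : N.StructuralConflictNet) (s : S)
    (h : N.AdjEquiv σ ρ) : σ.filter (N.pre · s ≠ 0) = ρ.filter (N.pre · s ≠ 0) := by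
  induction h with
  | refl => rfl
  | tail _ hadj ih => exact ih.trans (hN.filter_eq_of_adjacent s hadj)

theorem InConflict.exists_shared_preplace {G : Multiset T} (hG : N.InConflict M G) :
    ∃ s, ∃ t ∈ G, ∃ u ∈ G, t ≠ u ∧ N.pre t s ≠ 0 ∧ N.pre u s ≠ 0 := by
  obtain ⟨hG0, hparts, hG⟩ := hG
  obtain ⟨s, hs⟩ : ∃ s, M s < N.preM G s := by
    by_contra! h
    exact hG ⟨hG0, h⟩
  refine ⟨s, ?_⟩
  by_contra! hsingle
  obtain ⟨t, ht, hzero⟩ : ∃ t ∈ G, ∀ u ∈ G, u ≠ t → N.pre u s = 0 := by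
    by_cases hex : ∃ t ∈ G, N.pre t s ≠ 0
    · obtain ⟨t, ht, hts⟩ := hex
      exact ⟨t, ht, fun u hu hut => hsingle t ht u hu (Ne.symm hut) hts⟩
    · push Not at hex
      obtain ⟨t, ht⟩ := Multiset.exists_mem_of_ne_zero hG0
      exact ⟨t, ht, fun u hu _ => hex u hu⟩
  have hpreM : N.preM G s = G.count t * N.pre t s :=
    Multiset.sum_map_eq_nsmul_single t fun u hut hu => hzero u hu hut
  have := (hparts t ht).2 s
  rw [preM_replicate] at this
  omega

theorem InConflict.enabled_singleton {G : Multiset T} (hG : N.InConflict M G) (ht : t ∈ G) :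
    N.Enabled M {t} :=
  (hG.2.1 t ht).mono (Multiset.singleton_ne_zero t) <|
    Multiset.singleton_le.2 (Multiset.mem_replicate.2 ⟨Multiset.count_ne_zero.2 ht, rfl⟩)

end Net

section FSRuns

variable {S T : Type*} {N : Net S T}

theorem fsClass_eq_iff {σ ρ : FSeq N} : fsClass N σ = fsClass N ρ ↔ N.AdjEquiv σ.1 ρ.1 :=
  ⟨fun h => (Net.adjEquiv_equivalence.comap Subtype.val).eqvGen_iff.1 (Quot.eqvGen_exact h),
    fun h => Quot.sound h⟩

theorem fsRunLE_refl (x : PartialFSRun N) : fsRunLE N x x := by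
  obtain ⟨σ, rfl⟩ := Quot.exists_rep x
  exact ⟨σ, σ, rfl, rfl, σ.1, List.prefix_refl _, .refl⟩

theorem fsRunLE_trans {x y z : PartialFSRun N} (hxy : fsRunLE N x y) (hyz : fsRunLE N y z) :
    fsRunLE N x z := by
  obtain ⟨σ, ρ, rfl, rfl, μ, hσμ, hμρ⟩ := hxy
  obtain ⟨ρ', τ, hρρ', rfl, _, ⟨w, rfl⟩, hτ⟩ := hyz
  have hρw : N.FS (ρ'.1 ++ w) := by
    obtain ⟨M, hM⟩ := τ.2
    exact ⟨M, hτ.symm.fireSeq hM⟩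
  have hμρ' : N.AdjEquiv μ ρ'.1 := hμρ.trans (fsClass_eq_iff.1 hρρ'.symm)
  exact ⟨σ, τ, rfl, rfl, μ ++ w, hσμ.trans (List.prefix_append _ _),
    (hμρ'.append_right hρw).trans hτ⟩

theorem isFSRun_setOf_fsRunLE (x : PartialFSRun N) : IsFSRun N {y | fsRunLE N y x} :=
  ⟨fun _ _ => fsRunLE_trans, fun _ hy _ hz => ⟨x, fsRunLE_refl x, hy, hz⟩⟩

theorem isFSRun_sUnion {c : Set (Set (PartialFSRun N))} (hc : ∀ R ∈ c, IsFSRun N R)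
    (hchain : IsChain (· ⊆ ·) c) : IsFSRun N (⋃₀ c) := by
  refine ⟨fun x y hxy ⟨R, hR, hy⟩ => ⟨R, hR, (hc R hR).1 x y hxy hy⟩, ?_⟩
  rintro x ⟨R₁, hR₁, hx⟩ y ⟨R₂, hR₂, hy⟩
  obtain ⟨R, hR, hxR, hyR⟩ : ∃ R ∈ c, x ∈ R ∧ y ∈ R := by
    rcases hchain.total hR₁ hR₂ with h | h
    exacts [⟨R₂, hR₂, h hx, hy⟩, ⟨R₁, hR₁, hx, h hy⟩]
  obtain ⟨z, hz, hxz, hyz⟩ := (hc R hR).2 x hxR y hyR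
  exact ⟨z, ⟨R, hR, hz⟩, hxz, hyz⟩

theorem exists_maximal_fsRun_mem (x : PartialFSRun N) :
    ∃ R, IsFSRun N R ∧ x ∈ R ∧ ∀ R', IsFSRun N R' → R ⊆ R' → R' = R := by
  obtain ⟨R, -, hR⟩ := zorn_subset_nonempty {R | IsFSRun N R ∧ x ∈ R}
    (fun c hc hchain ⟨R₀, hR₀⟩ =>
      ⟨⋃₀ c, ⟨isFSRun_sUnion (fun R hR => (hc hR).1) hchain, ⟨R₀, hR₀, (hc hR₀).2⟩⟩,
        fun _ => Set.subset_sUnion_of_mem⟩)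
    _ ⟨isFSRun_setOf_fsRunLE x, fsRunLE_refl x⟩
  exact ⟨R, hR.1.1, hR.1.2, fun R' hR' hRR' => (hR.eq_of_subset ⟨hR', hRR' hR.1.2⟩ hRR').symm⟩

theorem Net.StructuralConflictNet.filter_prefix_of_fsRunLE (hN : N.StructuralConflictNet) (s : S)
    {σ ρ : FSeq N} (h : fsRunLE N (fsClass N σ) (fsClass N ρ)) :
    σ.1.filter (N.pre · s ≠ 0) <+: ρ.1.filter (N.pre · s ≠ 0) := by
  obtain ⟨σ', ρ', hσσ', hρρ', μ, hσ'μ, hμρ'⟩ := h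
  rw [hN.filter_eq_of_adjEquiv s (fsClass_eq_iff.1 hσσ'.symm),
    hN.filter_eq_of_adjEquiv s (fsClass_eq_iff.1 hρρ'.symm), ← hN.filter_eq_of_adjEquiv s hμρ']
  exact hσ'μ.filter _

end FSRuns

/-- Theorem 6 of the paper: a structural conflict net with
exactly one maximal FS-run (wrt set inclusion) is conflict-free. -/
theorem conflictFree_of_unique_maximal_fsRun {S T : Type*}
    (N : Net S T) (hN : N.StructuralConflictNet)
    (h : ∃! R : Set (PartialFSRun N), IsFSRun N R ∧
      ∀ R' : Set (PartialFSRun N), IsFSRun N R' → R ⊆ R' → R' = R) :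
    N.ConflictFree := by
  obtain ⟨R, ⟨hR, -⟩, huniq⟩ := h
  rintro M ⟨σ, hσ⟩ G hG
  obtain ⟨s, t, ht, u, hu, htu, hts, hus⟩ := hG.exists_shared_preplace
  have hmem (v : T) (hv : v ∈ G) : ∃ hfs : N.FS (σ ++ [v]), fsClass N ⟨σ ++ [v], hfs⟩ ∈ R := by
    have hfs : N.FS (σ ++ [v]) :=
      ⟨_, Net.fireSeq_append.2 ⟨M, hσ, _, ⟨hG.enabled_singleton hv, fun _ => rfl⟩, rfl⟩⟩
    obtain ⟨R', hR', hvR', hmax⟩ := exists_maximal_fsRun_mem (fsClass N ⟨_, hfs⟩)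
    exact ⟨hfs, huniq R' ⟨hR', hmax⟩ ▸ hvR'⟩
  obtain ⟨_, htR⟩ := hmem t ht
  obtain ⟨_, huR⟩ := hmem u hu
  obtain ⟨z, -, htz, huz⟩ := hR.2 _ htR _ huR
  obtain ⟨ρ, rfl⟩ := Quot.exists_rep z
  have hρt := hN.filter_prefix_of_fsRunLE s htz
  have hρu := hN.filter_prefix_of_fsRunLE s huz
  simp only [List.filter_append, List.filter_singleton, hts, hus, ne_eq, not_false_eq_true,
    decide_true, cond_true] at hρt hρu
  have htu' := (List.prefix_of_prefix_length_le hρt hρu (by simp)).eq_of_length (by simp)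
  exact htu (by simpa using htu')
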